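/- arXiv:2206.14549 — 2 statements merged into one kernel-verified Lean document; each statement's English description precedes it below -/
import Mathlib

section
/- Let φ : G' → G be a surjective group homomorphism with central kernel K, and let σ' : G' → G' and σ : G → G be automorphisms with φ ∘ σ' = σ ∘ φ. Suppose the Lang map λ(y) = y⁻¹σ'(y) on G' is surjective. Then the map sending x ∈ Fix(σ) to the class of y⁻¹σ'(y) in K / λ(K), where y is any preimage of x under φ, is a well-defined surjective group homomorphism with kernel φ(Fix(σ')). In particular Fix(σ) / φ(Fix(σ')) ≅ K / λ(K). -/
/-- The subgroup of fixed points of a group endomorphism. -/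
def fixedSubgroup {G : Type*} [Group G] (σ : G →* G) : Subgroup G where
  carrier := {x | σ x = x}
  one_mem' := map_one σ
  mul_mem' := by
    intro a b ha hb
    simp only [Set.mem_setOf_eq, map_mul] at *
    rw [ha, hb]
  inv_mem' := by
    intro a ha
    simp only [Set.mem_setOf_eq, map_inv] at *
    rw [ha]

theorem lang_cokernel_iso
    {G' G : Type*} [Group G'] [Group G] (φ : G' →* G)
    (hsurj : Function.Surjective φ) (hcentral : φ.ker ≤ Subgroup.center G')
    (σ' : G' ≃* G') (σ : G ≃* G)
    (hcomm : ∀ y : G', φ (σ' y) = σ (φ y))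
    (hlang : ∀ g : G', ∃ y : G', y⁻¹ * σ' y = g)
    (lamK : Subgroup G')
    (hlamK : (lamK : Set G') = {x : G' | ∃ a ∈ φ.ker, x = a⁻¹ * σ' a})
    (hle : lamK ≤ φ.ker)
    [hnorm : (lamK.subgroupOf φ.ker).Normal]
    [hnorm2 : (((fixedSubgroup σ'.toMonoidHom).map φ).subgroupOf
        (fixedSubgroup σ.toMonoidHom)).Normal] :
    ∃ μ : fixedSubgroup σ.toMonoidHom →* (φ.ker ⧸ lamK.subgroupOf φ.ker),
      (∀ (x : fixedSubgroup σ.toMonoidHom) (y : G') (_ : φ y = (x : G))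
        (hmem : y⁻¹ * σ' y ∈ φ.ker),
        μ x = QuotientGroup.mk ⟨y⁻¹ * σ' y, hmem⟩) ∧
      Function.Surjective μ ∧
      μ.ker = ((fixedSubgroup σ'.toMonoidHom).map φ).subgroupOf
          (fixedSubgroup σ.toMonoidHom) ∧
      Nonempty ((fixedSubgroup σ.toMonoidHom ⧸
          ((fixedSubgroup σ'.toMonoidHom).map φ).subgroupOf (fixedSubgroup σ.toMonoidHom))
        ≃* (φ.ker ⧸ lamK.subgroupOf φ.ker)) := by
  -- membership of Lang values in the kernel
  have hKmem : ∀ y : G', σ (φ y) = φ y → y⁻¹ * σ' y ∈ φ.ker := by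
    intro y hy
    rw [MonoidHom.mem_ker, map_mul, map_inv, hcomm, hy, inv_mul_cancel]
  -- key central-shift computation
  have keylem : ∀ y a : G', (∀ g : G', g * a⁻¹ = a⁻¹ * g) →
      (y⁻¹ * σ' y)⁻¹ * ((y * a)⁻¹ * σ' (y * a)) = a⁻¹ * σ' a := by
    intro y a hc
    calc (y⁻¹ * σ' y)⁻¹ * ((y * a)⁻¹ * σ' (y * a))
        = (σ' y)⁻¹ * (y * a⁻¹) * (y⁻¹ * (σ' y * σ' a)) := by rw [map_mul]; group
      _ = (σ' y)⁻¹ * (a⁻¹ * y) * (y⁻¹ * (σ' y * σ' a)) := by rw [hc y]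
      _ = (σ' y)⁻¹ * a⁻¹ * (σ' y * σ' a) := by group
      _ = a⁻¹ * (σ' y)⁻¹ * (σ' y * σ' a) := by rw [hc ((σ' y)⁻¹)]
      _ = a⁻¹ * σ' a := by group
  -- well-definedness
  have hwd : ∀ (y₁ y₂ : G'), φ y₁ = φ y₂ →
      ∀ (h₁ : y₁⁻¹ * σ' y₁ ∈ φ.ker) (h₂ : y₂⁻¹ * σ' y₂ ∈ φ.ker),
      (QuotientGroup.mk ⟨y₁⁻¹ * σ' y₁, h₁⟩ : φ.ker ⧸ lamK.subgroupOf φ.ker)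
        = QuotientGroup.mk ⟨y₂⁻¹ * σ' y₂, h₂⟩ := by
    intro y₁ y₂ heq h₁ h₂
    rw [QuotientGroup.eq]
    have ha : y₁⁻¹ * y₂ ∈ φ.ker := by
      rw [MonoidHom.mem_ker, map_mul, map_inv, heq, inv_mul_cancel]
    have hc : ∀ g : G', g * (y₁⁻¹ * y₂)⁻¹ = (y₁⁻¹ * y₂)⁻¹ * g :=
      Subgroup.mem_center_iff.mp (Subgroup.inv_mem _ (hcentral ha))
    have key : (y₁⁻¹ * σ' y₁)⁻¹ * (y₂⁻¹ * σ' y₂)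
        = (y₁⁻¹ * y₂)⁻¹ * σ' (y₁⁻¹ * y₂) := by
      conv_lhs => rw [show y₂ = y₁ * (y₁⁻¹ * y₂) from by group]
      exact keylem y₁ (y₁⁻¹ * y₂) hc
    rw [Subgroup.mem_subgroupOf, ← SetLike.mem_coe, hlamK]
    refine ⟨y₁⁻¹ * y₂, ha, ?_⟩
    push_cast
    exact key
  -- the underlying function
  have memy : ∀ x : fixedSubgroup σ.toMonoidHom,
      (Classical.choose (hsurj (x : G)))⁻¹ * σ' (Classical.choose (hsurj (x : G))) ∈ φ.ker := by
    intro x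
    apply hKmem
    rw [Classical.choose_spec (hsurj (x : G))]
    exact x.2
  set f : fixedSubgroup σ.toMonoidHom → (φ.ker ⧸ lamK.subgroupOf φ.ker) :=
    fun x => QuotientGroup.mk ⟨_, memy x⟩ with hf
  have hprop : ∀ (x : fixedSubgroup σ.toMonoidHom) (y : G') (_ : φ y = (x : G))
      (hmem : y⁻¹ * σ' y ∈ φ.ker), f x = QuotientGroup.mk ⟨y⁻¹ * σ' y, hmem⟩ := by
    intro x y hy hmem
    exact hwd _ y ((Classical.choose_spec (hsurj (x : G))).trans hy.symm) _ hmem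
  -- multiplicativity helper
  have hmulkey : ∀ y₁ y₂ : G', y₁⁻¹ * σ' y₁ ∈ φ.ker →
      (y₁ * y₂)⁻¹ * σ' (y₁ * y₂) = (y₁⁻¹ * σ' y₁) * (y₂⁻¹ * σ' y₂) := by
    intro y₁ y₂ h₁
    have hc : ∀ g : G', g * (y₁⁻¹ * σ' y₁) = (y₁⁻¹ * σ' y₁) * g :=
      Subgroup.mem_center_iff.mp (hcentral h₁)
    calc (y₁ * y₂)⁻¹ * σ' (y₁ * y₂)
        = y₂⁻¹ * (y₁⁻¹ * σ' y₁) * σ' y₂ := by rw [map_mul]; group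
      _ = (y₁⁻¹ * σ' y₁) * y₂⁻¹ * σ' y₂ := by rw [hc]
      _ = (y₁⁻¹ * σ' y₁) * (y₂⁻¹ * σ' y₂) := by group
  -- the homomorphism
  have hone : f 1 = 1 := by
    rw [hprop 1 1 (by simp) (by simp [Subgroup.one_mem])]
    have h1 : ((⟨(1 : G')⁻¹ * σ' 1, by simp [Subgroup.one_mem]⟩ : φ.ker)) = 1 := by
      ext; simp
    rw [h1, QuotientGroup.mk_one]
  have hmul : ∀ x₁ x₂, f (x₁ * x₂) = f x₁ * f x₂ := by
    intro x₁ x₂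
    have hy₁ := Classical.choose_spec (hsurj (x₁ : G))
    have hy₂ := Classical.choose_spec (hsurj (x₂ : G))
    set y₁ := Classical.choose (hsurj (x₁ : G))
    set y₂ := Classical.choose (hsurj (x₂ : G))
    have hmem12 : (y₁ * y₂)⁻¹ * σ' (y₁ * y₂) ∈ φ.ker := by
      rw [hmulkey y₁ y₂ (memy x₁)]
      exact Subgroup.mul_mem _ (memy x₁) (memy x₂)
    rw [hprop (x₁ * x₂) (y₁ * y₂) (by rw [map_mul, hy₁, hy₂]; rfl) hmem12]
    show _ = QuotientGroup.mk ((⟨_, memy x₁⟩ : φ.ker) * ⟨_, memy x₂⟩)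
    congr 1
    ext
    exact hmulkey y₁ y₂ (memy x₁)
  set μ : fixedSubgroup σ.toMonoidHom →* (φ.ker ⧸ lamK.subgroupOf φ.ker) :=
    { toFun := f, map_one' := hone, map_mul' := hmul } with hμ
  have hμapp : ∀ x, μ x = f x := fun _ => rfl
  -- surjectivity
  have hsurjμ : Function.Surjective μ := by
    intro q
    induction q using QuotientGroup.induction_on with
    | H k =>
      obtain ⟨y, hy⟩ := hlang (k : G')
      have hxfix : σ (φ y) = φ y := by
        have h2 : φ (σ' y) = φ y := by
          have h3 : σ' y = y * (y⁻¹ * σ' y) := by group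
          rw [h3, map_mul, hy, MonoidHom.mem_ker.mp k.2, mul_one]
        rw [← hcomm, h2]
      refine ⟨⟨φ y, hxfix⟩, ?_⟩
      have hmem : y⁻¹ * σ' y ∈ φ.ker := hy ▸ k.2
      rw [hμapp, hprop ⟨φ y, hxfix⟩ y rfl hmem]
      congr 1
      exact Subtype.ext hy
  -- kernel computation
  have hker : μ.ker = ((fixedSubgroup σ'.toMonoidHom).map φ).subgroupOf
      (fixedSubgroup σ.toMonoidHom) := by
    ext x
    rw [MonoidHom.mem_ker, hμapp]
    constructor
    · intro hx
      obtain ⟨y, hy⟩ := hsurj (x : G)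
      have hmem : y⁻¹ * σ' y ∈ φ.ker := by
        apply hKmem; rw [hy]; exact x.2
      rw [hprop x y hy hmem, QuotientGroup.eq_one_iff, Subgroup.mem_subgroupOf] at hx
      have hx' : (y⁻¹ * σ' y) ∈ (lamK : Set G') := hx
      rw [hlamK] at hx'
      obtain ⟨a, haK, hay⟩ := hx'
      have hz : σ' (y * a⁻¹) = y * a⁻¹ := by
        have h4 : (y * a⁻¹)⁻¹ * σ' (y * a⁻¹) = 1 := by
          rw [map_mul, map_inv]
          calc (y * a⁻¹)⁻¹ * (σ' y * (σ' a)⁻¹)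
              = a * (y⁻¹ * σ' y) * (σ' a)⁻¹ := by group
            _ = a * (a⁻¹ * σ' a) * (σ' a)⁻¹ := by rw [hay]
            _ = 1 := by group
        have h5 := congrArg (fun g => (y * a⁻¹) * g) h4
        simpa [mul_assoc] using h5
      rw [Subgroup.mem_subgroupOf, Subgroup.mem_map]
      refine ⟨y * a⁻¹, hz, ?_⟩
      rw [map_mul, map_inv, MonoidHom.mem_ker.mp haK, inv_one, mul_one, hy]
    · intro hx
      rw [Subgroup.mem_subgroupOf, Subgroup.mem_map] at hx
      obtain ⟨z, hz, hzx⟩ := hx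
      have hz' : σ' z = z := hz
      have hmem : z⁻¹ * σ' z ∈ φ.ker := by rw [hz', inv_mul_cancel]; exact Subgroup.one_mem _
      rw [hprop x z hzx hmem]
      have h6 : ((⟨z⁻¹ * σ' z, hmem⟩ : φ.ker)) = 1 := by
        ext; simp [hz']
      rw [h6, QuotientGroup.mk_one]
  refine ⟨μ, hprop, hsurjμ, hker, ?_⟩
  exact ⟨(QuotientGroup.quotientMulEquivOfEq hker.symm).trans
    (QuotientGroup.quotientKerEquivOfSurjective μ hsurjμ)⟩
end

section
/- Under the hypotheses above (φ : G' → G surjective with central kernel K, intertwined automorphisms σ', σ, Lang map surjective on G'), the image φ(Fix(σ')) is a normal subgroup of Fix(σ). -/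
/-! Every `g ∈ Fix σ` lifts to some `y`, and then `φ (y⁻¹ σ' y) = 1`, so `y⁻¹ σ' y` is central:
`σ'` moves `y` only by a central factor, hence conjugation by `y` preserves `Fix σ'`. -/

section FixedSubgroup

variable {G' G : Type*} [Group G'] [Group G]

theorem mem_fixedSubgroup_iff {σ : G →* G} {x : G} : x ∈ fixedSubgroup σ ↔ σ x = x :=
  Iff.rfl

theorem map_fixedSubgroup_le {φ : G' →* G} {σ' : G' →* G'} {σ : G →* G}
    (hcomm : ∀ y, φ (σ' y) = σ (φ y)) :
    (fixedSubgroup σ').map φ ≤ fixedSubgroup σ := by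
  rintro _ ⟨h, hh, rfl⟩
  rw [mem_fixedSubgroup_iff, ← hcomm, mem_fixedSubgroup_iff.mp hh]

theorem inv_mul_apply_mem_ker {φ : G' →* G} {σ' : G' →* G'} {σ : G →* G}
    (hcomm : ∀ y, φ (σ' y) = σ (φ y)) {y : G'} (hy : φ y ∈ fixedSubgroup σ) :
    y⁻¹ * σ' y ∈ φ.ker := by
  rw [MonoidHom.mem_ker, map_mul, map_inv, hcomm, mem_fixedSubgroup_iff.mp hy, inv_mul_cancel]

theorem conj_mem_fixedSubgroup {σ : G →* G} {y h : G} (hy : y⁻¹ * σ y ∈ Subgroup.center G)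
    (hh : h ∈ fixedSubgroup σ) : y * h * y⁻¹ ∈ fixedSubgroup σ := by
  set k := y⁻¹ * σ y
  have hσy : σ y = y * k := by simp only [k, mul_inv_cancel_left]
  have hhk : h * k = k * h := Subgroup.mem_center_iff.mp hy h
  rw [mem_fixedSubgroup_iff, map_mul, map_mul, map_inv, hσy, mem_fixedSubgroup_iff.mp hh]
  calc y * k * h * (y * k)⁻¹ = y * (k * h) * k⁻¹ * y⁻¹ := by group
    _ = y * h * y⁻¹ := by rw [← hhk]; group

end FixedSubgroup

theorem image_of_fixed_points_normal_general
    {G' G : Type*} [Group G'] [Group G] (φ : G' →* G)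
    (hsurj : Function.Surjective φ) (hcentral : φ.ker ≤ Subgroup.center G')
    (σ' : G' ≃* G') (σ : G ≃* G)
    (hcomm : ∀ y : G', φ (σ' y) = σ (φ y)) :
    (fixedSubgroup σ'.toMonoidHom).map φ ≤ fixedSubgroup σ.toMonoidHom ∧
    (((fixedSubgroup σ'.toMonoidHom).map φ).subgroupOf
        (fixedSubgroup σ.toMonoidHom)).Normal := by
  have hle := map_fixedSubgroup_le (σ' := σ'.toMonoidHom) (σ := σ.toMonoidHom) hcomm
  refine ⟨hle, (Subgroup.normal_subgroupOf_iff hle).mpr ?_⟩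
  rintro _ g ⟨h, hh, rfl⟩ hg
  obtain ⟨y, rfl⟩ := hsurj g
  have hy := hcentral (inv_mul_apply_mem_ker (σ' := σ'.toMonoidHom) hcomm hg)
  exact ⟨y * h * y⁻¹, conj_mem_fixedSubgroup hy hh, by simp only [map_mul, map_inv]⟩

theorem image_of_fixed_points_normal
    {G' G : Type*} [Group G'] [Group G] (φ : G' →* G)
    (hsurj : Function.Surjective φ) (hcentral : φ.ker ≤ Subgroup.center G')
    (σ' : G' ≃* G') (σ : G ≃* G)
    (hcomm : ∀ y : G', φ (σ' y) = σ (φ y))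
    (hlang : ∀ g : G', ∃ y : G', y⁻¹ * σ' y = g) :
    (fixedSubgroup σ'.toMonoidHom).map φ ≤ fixedSubgroup σ.toMonoidHom ∧
    (((fixedSubgroup σ'.toMonoidHom).map φ).subgroupOf
        (fixedSubgroup σ.toMonoidHom)).Normal :=
  image_of_fixed_points_normal_general φ hsurj hcentral σ' σ hcomm
end
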